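/- Let α,β,γ,δ,k ∈ ℝ with αδ−βγ ≠ 0, let n ≥ 1 be a natural number, and define ψ(t) = (αt+β)/(γt+δ) for real t with γt+δ ≠ 0. Suppose that for every t ∈ ℝ such that γt+δ ≠ 0 and γ·ψ(t)+δ ≠ 0 one has ψ(ψ(t)) = t, and that for every t ∈ ℝ with γt+δ ≠ 0 one has (k·(γ·ψ(t)+δ)ⁿ)·(k·(γt+δ)ⁿ) = 1. Then either (I) α = −δ and k²·(γβ+δ²)ⁿ = 1, or (II) β = γ = 0, α = δ ≠ 0, and k²·δ²ⁿ = 1. -/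

import Mathlib

/-!
Multiplying out, `(γ ψ(t) + δ)(γ t + δ) = γ(α+δ) t + (γβ + δ²)`, so the second hypothesis says
that `k² (γ(α+δ) t + γβ + δ²)ⁿ = 1` for all but at most one `t`. A nonconstant affine function
cannot make this hold, so `γ(α+δ) = 0`. If `α = -δ` we are in case (I). Otherwise `γ = 0`, `ψ` is
the affine map `t ↦ (α t + β)/δ`, and an affine involution other than `t ↦ c - t` is the identity,
which is case (II).
-/

lemma not_forall_ne_mul_pow_eq_one {n : ℕ} (hn : n ≠ 0) (c x₀ : ℝ) :
    ¬ ∀ x, x ≠ x₀ → c * x ^ n = 1 := by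
  intro H
  set x := |x₀| + 1
  have hx : x₀ < x := by linarith [le_abs_self x₀]
  have hx2 : x₀ < 2 * x := by linarith [abs_nonneg x₀]
  have h₁ := H x hx.ne'
  have h₂ := H (2 * x) hx2.ne'
  have h₂' : (c * x ^ n) * 2 ^ n = 1 := by rw [← h₂, mul_pow]; ring
  rw [h₁, one_mul] at h₂'
  exact (one_lt_pow₀ (by norm_num : (1 : ℝ) < 2) hn).ne' h₂'

lemma eq_zero_of_forall_ne_mul_affine_pow_eq_one {n : ℕ} (hn : n ≠ 0) {a b c t₀ : ℝ}
    (H : ∀ t, t ≠ t₀ → c * (a * t + b) ^ n = 1) : a = 0 := by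
  by_contra ha
  refine not_forall_ne_mul_pow_eq_one hn c (a * t₀ + b) fun x hx => ?_
  have ht : (x - b) / a ≠ t₀ := by
    rintro rfl
    exact hx (by field_simp; ring)
  simpa [show a * ((x - b) / a) + b = x by field_simp; ring] using H _ ht

lemma exists_mul_add_ne_zero {γ δ : ℝ} (h : γ ≠ 0 ∨ δ ≠ 0) : ∃ t : ℝ, γ * t + δ ≠ 0 := by
  by_cases hδ : δ = 0
  · exact ⟨1, by simpa [hδ] using h⟩
  · exact ⟨0, by simpa using hδ⟩

lemma affine_involution_cases {a b : ℝ} (h : ∀ t, a * (a * t + b) + b = t) :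
    a = -1 ∨ (a = 1 ∧ b = 0) := by
  have h₀ := h 0
  have h₁ := h 1
  have hsq : (a - 1) * (a + 1) = 0 := by linarith
  rcases mul_eq_zero.mp hsq with h' | h'
  · exact Or.inr ⟨by linarith, by nlinarith⟩
  · exact Or.inl (by linarith)

section Mobius

variable {α β γ δ : ℝ} {ψ : ℝ → ℝ} (hψ : ∀ t : ℝ, γ * t + δ ≠ 0 → ψ t = (α * t + β) / (γ * t + δ))
include hψ

lemma mobius_denom_mul_denom {t : ℝ} (ht : γ * t + δ ≠ 0) :
    (γ * ψ t + δ) * (γ * t + δ) = γ * (α + δ) * t + (γ * β + δ ^ 2) := by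
  rw [hψ t ht]; field_simp; ring

lemma sq_mul_pow_denom_mul_denom_eq_one {k : ℝ} {n : ℕ}
    (h : ∀ t : ℝ, γ * t + δ ≠ 0 → (k * (γ * ψ t + δ) ^ n) * (k * (γ * t + δ) ^ n) = 1)
    (t : ℝ) (ht : γ * t + δ ≠ 0) :
    k ^ 2 * (γ * (α + δ) * t + (γ * β + δ ^ 2)) ^ n = 1 := by
  rw [← mobius_denom_mul_denom hψ ht, ← h t ht, mul_pow]; ring

lemma mul_add_eq_zero_of_denom_cocycle {k : ℝ} {n : ℕ} (hn : n ≠ 0)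
    (h : ∀ t : ℝ, γ * t + δ ≠ 0 → (k * (γ * ψ t + δ) ^ n) * (k * (γ * t + δ) ^ n) = 1) :
    γ * (α + δ) = 0 := by
  rcases eq_or_ne γ 0 with hγ | hγ
  · simp [hγ]
  refine eq_zero_of_forall_ne_mul_affine_pow_eq_one (t₀ := -δ / γ) hn fun t ht =>
    sq_mul_pow_denom_mul_denom_eq_one hψ h t ?_
  contrapose! ht
  field_simp
  linarith

lemma eq_and_eq_zero_of_affine_of_involutive (hγ : γ = 0) (hδ : δ ≠ 0)
    (hαδ : α + δ ≠ 0) (hinv : ∀ t : ℝ, γ * t + δ ≠ 0 → γ * ψ t + δ ≠ 0 → ψ (ψ t) = t) :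
    α = δ ∧ β = 0 := by
  have hden : ∀ t, γ * t + δ ≠ 0 := by simpa [hγ]
  have hψ_affine : ∀ t, ψ t = α / δ * t + β / δ := by
    intro t
    rw [hψ t (hden t), hγ, zero_mul, zero_add]
    ring
  have hinv_affine : ∀ t, α / δ * (α / δ * t + β / δ) + β / δ = t := by
    intro t
    rw [← hψ_affine, ← hψ_affine]
    exact hinv t (hden t) (hden _)
  rcases affine_involution_cases hinv_affine with hα | ⟨hα, hβ⟩
  · exact absurd (by field_simp at hα; linarith) hαδ
  exact ⟨(div_eq_one_iff_eq hδ).mp hα, (div_eq_zero_iff.mp hβ).resolve_right hδ⟩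

end Mobius

/-- Theorem 8 (fund3): if `φ(t,s) = (ψ(t), k(γt+δ)^n·s + c(t))` is an involution, then
either (I) `α = −δ` and `k²(γβ+δ²)^n = 1`, or (II) `β = γ = 0`, `α = δ ≠ 0`
and `k²δ^(2n) = 1`. -/
theorem stmt_7 (α β γ δ k : ℝ) (hm : α * δ - β * γ ≠ 0)
    (n : ℕ) (hn : 1 ≤ n)
    (ψ : ℝ → ℝ) (hψ : ∀ t : ℝ, γ * t + δ ≠ 0 → ψ t = (α * t + β) / (γ * t + δ))
    (hinv : ∀ t : ℝ, γ * t + δ ≠ 0 → γ * ψ t + δ ≠ 0 → ψ (ψ t) = t)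
    (h : ∀ t : ℝ, γ * t + δ ≠ 0 →
      (k * (γ * ψ t + δ) ^ n) * (k * (γ * t + δ) ^ n) = 1) :
    (α = -δ ∧ k ^ 2 * (γ * β + δ ^ 2) ^ n = 1) ∨
      (β = 0 ∧ γ = 0 ∧ α = δ ∧ δ ≠ 0 ∧ k ^ 2 * δ ^ (2 * n) = 1) := by
  have key := sq_mul_pow_denom_mul_denom_eq_one hψ h
  by_cases hαδ : α + δ = 0
  · have hγδ : γ ≠ 0 ∨ δ ≠ 0 := by
      by_contra! h0
      simp [h0] at hm
    obtain ⟨t, ht⟩ := exists_mul_add_ne_zero hγδ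
    exact Or.inl ⟨by linarith, by simpa [hαδ] using key t ht⟩
  have hγ : γ = 0 :=
    (mul_eq_zero.mp (mul_add_eq_zero_of_denom_cocycle hψ (by omega) h)).resolve_right hαδ
  have hδ : δ ≠ 0 := by
    rintro rfl
    simp [hγ] at hm
  obtain ⟨hα, hβ⟩ := eq_and_eq_zero_of_affine_of_involutive hψ hγ hδ hαδ hinv
  refine Or.inr ⟨hβ, hγ, hα, hδ, ?_⟩
  simpa [hγ, pow_mul] using key 0 (by simpa [hγ])
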